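/- arXiv:2511.22217 — 5 statements merged into one kernel-verified Lean document; each statement's English description precedes it below -/
import Mathlib

section
/- In the score-threshold routing model, for every τ ∈ ℝ with f(τ) > 0 and ΔC(τ) ≠ 0, the frontier slope identity holds: Q′(τ) / C′(τ) = ΔQ(τ) / ΔC(τ) = ρ(τ). -/
/-!
By the fundamental theorem of calculus, moving the threshold past `τ` shifts the mass `f(τ) dτ`
from the edge to the cloud, so `Q'(τ) = ΔQ(τ) f(τ)` and `C'(τ) = ΔC(τ) f(τ)`; the density
cancels in the ratio.
-/

open MeasureTheory Set

section

variable {E : Type*} [NormedAddCommGroup E] [NormedSpace ℝ E] [CompleteSpace E]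
  {g : ℝ → E} {τ : ℝ}

theorem hasDerivAt_integral_Iio (hg : Integrable g) (hτ : ContinuousAt g τ) :
    HasDerivAt (fun t => ∫ s in Iio t, g s) (g τ) τ := by
  have hsplit : (fun t => ∫ s in Iio t, g s)
      = fun t => (∫ s in Iic 0, g s) + ∫ s in (0 : ℝ)..t, g s := by
    funext t
    rw [← integral_Iic_eq_integral_Iio,
      ← intervalIntegral.integral_Iic_sub_Iic hg.integrableOn hg.integrableOn, add_sub_cancel]
  rw [hsplit]
  exact (intervalIntegral.integral_hasDerivAt_right hg.intervalIntegrable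
    hg.aestronglyMeasurable.stronglyMeasurableAtFilter hτ).const_add _

theorem hasDerivAt_integral_Ioi (hg : Integrable g) (hτ : ContinuousAt g τ) :
    HasDerivAt (fun t => ∫ s in Ioi t, g s) (-g τ) τ := by
  have hsplit : (fun t => ∫ s in Ioi t, g s) = fun t => (∫ s, g s) - ∫ s in Iio t, g s := by
    funext t
    rw [← intervalIntegral.integral_Iic_add_Ioi hg.integrableOn hg.integrableOn,
      integral_Iic_eq_integral_Iio, add_sub_cancel_left]
  rw [hsplit]
  exact (hasDerivAt_integral_Iio hg hτ).const_sub _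

theorem hasDerivAt_integral_Ioi_add_integral_Iio {h : ℝ → E} (hg : Integrable g)
    (hh : Integrable h) (hgτ : ContinuousAt g τ) (hhτ : ContinuousAt h τ) :
    HasDerivAt (fun t => (∫ s in Ioi t, g s) + ∫ s in Iio t, h s) (h τ - g τ) τ := by
  rw [sub_eq_neg_add]
  exact (hasDerivAt_integral_Ioi hg hgτ).add (hasDerivAt_integral_Iio hh hhτ)

end

theorem deriv_integral_Ioi_add_integral_Iio_mul {f g h : ℝ → ℝ} {τ : ℝ}
    (hf : ContinuousAt f τ) (hg : ContinuousAt g τ) (hh : ContinuousAt h τ)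
    (hgf : Integrable (fun s => g s * f s)) (hhf : Integrable (fun s => h s * f s)) :
    deriv (fun t => (∫ s in Ioi t, g s * f s) + ∫ s in Iio t, h s * f s) τ
      = (h τ - g τ) * f τ := by
  rw [(hasDerivAt_integral_Ioi_add_integral_Iio hgf hhf
    (hg.mul hf) (hh.mul hf)).deriv, sub_mul]

theorem stmt_1_general (f qE qC cE cC : ℝ → ℝ)
    (hf : Continuous f)
    (hqE : Continuous qE) (hqC : Continuous qC)
    (hcE : Continuous cE) (hcC : Continuous cC)
    (hIqE : Integrable (fun s => qE s * f s))
    (hIqC : Integrable (fun s => qC s * f s))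
    (hIcE : Integrable (fun s => cE s * f s))
    (hIcC : Integrable (fun s => cC s * f s))
    (τ : ℝ) (hfτ : 0 < f τ) :
    deriv (fun τ => (∫ s in Ioi τ, qE s * f s) + ∫ s in Iio τ, qC s * f s) τ /
      deriv (fun τ => (∫ s in Ioi τ, cE s * f s) + ∫ s in Iio τ, cC s * f s) τ
    = (qC τ - qE τ) / (cC τ - cE τ) := by
  rw [deriv_integral_Ioi_add_integral_Iio_mul hf.continuousAt hqE.continuousAt
      hqC.continuousAt hIqE hIqC,
    deriv_integral_Ioi_add_integral_Iio_mul hf.continuousAt hcE.continuousAt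
      hcC.continuousAt hIcE hIcC,
    mul_div_mul_right _ _ hfτ.ne']

/-- Frontier slope identity.  In the score-threshold routing model,
for every `τ` with `f(τ) > 0` and `ΔC(τ) ≠ 0`,
`Q'(τ) / C'(τ) = ΔQ(τ) / ΔC(τ) = ρ(τ)`. -/
theorem stmt_1 (f qE qC cE cC : ℝ → ℝ)
    (hf : Continuous f) (hf0 : ∀ s, 0 ≤ f s) (hfprob : (∫ s, f s) = 1)
    (hqE : Continuous qE) (hqC : Continuous qC)
    (hcE : Continuous cE) (hcC : Continuous cC)
    (hIqE : Integrable (fun s => qE s * f s))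
    (hIqC : Integrable (fun s => qC s * f s))
    (hIcE : Integrable (fun s => cE s * f s))
    (hIcC : Integrable (fun s => cC s * f s))
    (τ : ℝ) (hfτ : 0 < f τ) (hΔCτ : cC τ - cE τ ≠ 0) :
    deriv (fun τ => (∫ s in Ioi τ, qE s * f s) + ∫ s in Iio τ, qC s * f s) τ /
      deriv (fun τ => (∫ s in Ioi τ, cE s * f s) + ∫ s in Iio τ, cC s * f s) τ
    = (qC τ - qE τ) / (cC τ - cE τ) :=
  stmt_1_general f qE qC cE cC hf hqE hqC hcE hcC hIqE hIqC hIcE hIcC τ hfτ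
end

section
/- In the score-threshold routing model, suppose f(s) > 0 and ΔC(s) > 0 for all s, ρ is continuous and strictly decreasing, and τ* ∈ ℝ satisfies ρ(τ*) = λ. Then τ* is the unique global maximizer of the utility J: J is strictly increasing on (−∞, τ*], strictly decreasing on [τ*, ∞), and J(τ) < J(τ*) for every τ ≠ τ*. -/
/-!
Moving the threshold from `x` to `y` reroutes exactly the scores in `[x, y)` from the edge to
the cloud, so `J y - J x = ∫_x^y (ΔQ - λ ΔC) f`. Since `ΔC f > 0`, the integrand has the sign of
`ρ - λ`, which by strict monotonicity of `ρ` is positive left of `τ*` and negative right of it.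
-/

open MeasureTheory Set

section ThresholdIntegral

variable {μ : Measure ℝ} [NullSingletonClass μ]

theorem integral_Ioi_add_integral_Iio_sub {u v : ℝ → ℝ} (hu : Integrable u μ)
    (hv : Integrable v μ) (x y : ℝ) :
    ((∫ s in Ioi y, u s ∂μ) + ∫ s in Iio y, v s ∂μ)
        - ((∫ s in Ioi x, u s ∂μ) + ∫ s in Iio x, v s ∂μ)
      = ∫ s in x..y, (v s - u s) ∂μ := by
  rw [intervalIntegral.integral_sub hv.intervalIntegrable hu.intervalIntegrable,
    ← intervalIntegral.integral_Ioi_sub_Ioi' hu.integrableOn hu.integrableOn,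
    ← intervalIntegral.integral_Iio_sub_Iio' hv.integrableOn hv.integrableOn]
  ring

end ThresholdIntegral

section SignOfDerivative

variable {F g : ℝ → ℝ} {t : ℝ}

theorem strictMonoOn_Iic_of_sub_eq_integral (hg : ∀ x y, IntervalIntegrable g volume x y)
    (hF : ∀ x y, F y - F x = ∫ s in x..y, g s) (hpos : ∀ s < t, 0 < g s) :
    StrictMonoOn F (Iic t) := by
  intro x _ y hy hxy
  have : 0 < ∫ s in x..y, g s :=
    intervalIntegral.intervalIntegral_pos_of_pos_on (hg x y)
      (fun s hs => hpos s (hs.2.trans_le hy)) hxy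
  linarith [hF x y]

theorem strictAntiOn_Ici_of_sub_eq_integral (hg : ∀ x y, IntervalIntegrable g volume x y)
    (hF : ∀ x y, F y - F x = ∫ s in x..y, g s) (hneg : ∀ s, t < s → g s < 0) :
    StrictAntiOn F (Ici t) := by
  intro x hx y _ hxy
  have : 0 < ∫ s in x..y, -g s :=
    intervalIntegral.intervalIntegral_pos_of_pos_on (hg x y).neg
      (fun s hs => neg_pos.2 (hneg s (hx.trans_lt hs.1))) hxy
  rw [intervalIntegral.integral_neg] at this
  linarith [hF x y]

end SignOfDerivative

theorem lt_of_strictMonoOn_Iic_of_strictAntiOn_Ici {α β : Type*} [LinearOrder α] [Preorder β]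
    {F : α → β} {t x : α} (hmono : StrictMonoOn F (Iic t)) (hanti : StrictAntiOn F (Ici t))
    (hx : x ≠ t) : F x < F t := by
  rcases hx.lt_or_gt with h | h
  · exact hmono h.le le_rfl h
  · exact hanti le_rfl h.le h

noncomputable section RoutingModel

variable (f qE qC cE cC : ℝ → ℝ) (lam : ℝ)

def thresholdUtility (τ : ℝ) : ℝ :=
  ((∫ s in Ioi τ, qE s * f s) + ∫ s in Iio τ, qC s * f s)
    - lam * ((∫ s in Ioi τ, cE s * f s) + ∫ s in Iio τ, cC s * f s)

def marginalUtility (s : ℝ) : ℝ :=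
  ((qC s - qE s) - lam * (cC s - cE s)) * f s

variable {f qE qC cE cC lam}

theorem thresholdUtility_sub_eq_integral
    (hIqE : Integrable (fun s => qE s * f s)) (hIqC : Integrable (fun s => qC s * f s))
    (hIcE : Integrable (fun s => cE s * f s)) (hIcC : Integrable (fun s => cC s * f s))
    (x y : ℝ) :
    thresholdUtility f qE qC cE cC lam y - thresholdUtility f qE qC cE cC lam x
      = ∫ s in x..y, marginalUtility f qE qC cE cC lam s := by
  have hQ := integral_Ioi_add_integral_Iio_sub hIqE hIqC x y
  have hC := integral_Ioi_add_integral_Iio_sub hIcE hIcC x y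
  have hmarg : ∫ s in x..y, marginalUtility f qE qC cE cC lam s
      = (∫ s in x..y, (qC s * f s - qE s * f s))
        - lam * ∫ s in x..y, (cC s * f s - cE s * f s) := by
    have hΔQf : IntervalIntegrable (fun s => qC s * f s - qE s * f s) volume x y :=
      (hIqC.sub hIqE).intervalIntegrable
    have hΔCf : IntervalIntegrable (fun s => cC s * f s - cE s * f s) volume x y :=
      (hIcC.sub hIcE).intervalIntegrable
    rw [← intervalIntegral.integral_const_mul,
      ← intervalIntegral.integral_sub hΔQf (hΔCf.const_mul lam)]
    congr 1 with s
    simp only [marginalUtility]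
    ring
  rw [hmarg, ← hQ, ← hC, thresholdUtility, thresholdUtility]
  ring

theorem integrable_marginalUtility
    (hIqE : Integrable (fun s => qE s * f s)) (hIqC : Integrable (fun s => qC s * f s))
    (hIcE : Integrable (fun s => cE s * f s)) (hIcC : Integrable (fun s => cC s * f s)) :
    Integrable (marginalUtility f qE qC cE cC lam) :=
  ((hIqC.sub hIqE).sub ((hIcC.sub hIcE).const_mul lam)).congr
    (Filter.Eventually.of_forall fun s => by simp only [marginalUtility, Pi.sub_apply]; ring)

theorem marginalUtility_pos {s : ℝ} (hf : 0 < f s) (hΔC : 0 < cC s - cE s)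
    (hρ : lam < (qC s - qE s) / (cC s - cE s)) :
    0 < marginalUtility f qE qC cE cC lam s := by
  rw [lt_div_iff₀ hΔC] at hρ
  exact mul_pos (by linarith) hf

theorem marginalUtility_neg {s : ℝ} (hf : 0 < f s) (hΔC : 0 < cC s - cE s)
    (hρ : (qC s - qE s) / (cC s - cE s) < lam) :
    marginalUtility f qE qC cE cC lam s < 0 := by
  rw [div_lt_iff₀ hΔC] at hρ
  exact mul_neg_of_neg_of_pos (by linarith) hf

end RoutingModel

theorem stmt_5_general (f qE qC cE cC : ℝ → ℝ) (lam : ℝ)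
    (hfpos : ∀ s, 0 < f s)
    (hIqE : Integrable (fun s => qE s * f s))
    (hIqC : Integrable (fun s => qC s * f s))
    (hIcE : Integrable (fun s => cE s * f s))
    (hIcC : Integrable (fun s => cC s * f s))
    (hΔC : ∀ s, 0 < cC s - cE s)
    (hρanti : StrictAnti (fun s => (qC s - qE s) / (cC s - cE s)))
    (τstar : ℝ) (hτstar : (qC τstar - qE τstar) / (cC τstar - cE τstar) = lam) :
    let J : ℝ → ℝ := fun τ =>
      ((∫ s in Ioi τ, qE s * f s) + ∫ s in Iio τ, qC s * f s)
        - lam * ((∫ s in Ioi τ, cE s * f s) + ∫ s in Iio τ, cC s * f s)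
    StrictMonoOn J (Iic τstar) ∧ StrictAntiOn J (Ici τstar)
      ∧ ∀ τ : ℝ, τ ≠ τstar → J τ < J τstar := by
  intro J
  have hJ := thresholdUtility_sub_eq_integral (lam := lam) hIqE hIqC hIcE hIcC
  have hg : ∀ x y, IntervalIntegrable (marginalUtility f qE qC cE cC lam) volume x y :=
    fun _ _ => (integrable_marginalUtility hIqE hIqC hIcE hIcC).intervalIntegrable
  have hmono : StrictMonoOn J (Iic τstar) :=
    strictMonoOn_Iic_of_sub_eq_integral hg hJ fun s hs =>
      marginalUtility_pos (hfpos s) (hΔC s) (hτstar ▸ hρanti hs)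
  have hanti : StrictAntiOn J (Ici τstar) :=
    strictAntiOn_Ici_of_sub_eq_integral hg hJ fun s hs =>
      marginalUtility_neg (hfpos s) (hΔC s) (hτstar ▸ hρanti hs)
  exact ⟨hmono, hanti, fun τ hτ => lt_of_strictMonoOn_Iic_of_strictAntiOn_Ici hmono hanti hτ⟩

/-- If `f > 0`, `ΔC > 0`, `ρ` is continuous and strictly decreasing, and
`ρ(τ*) = λ`, then `τ*` is the unique global maximizer of `J`: `J` is strictly increasing
on `(−∞, τ*]`, strictly decreasing on `[τ*, ∞)`, and `J(τ) < J(τ*)` for every `τ ≠ τ*`. -/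
theorem stmt_5 (f qE qC cE cC : ℝ → ℝ) (lam : ℝ) (hlam : 0 < lam)
    (hf : Continuous f) (hfpos : ∀ s, 0 < f s) (hfprob : (∫ s, f s) = 1)
    (hqE : Continuous qE) (hqC : Continuous qC)
    (hcE : Continuous cE) (hcC : Continuous cC)
    (hIqE : Integrable (fun s => qE s * f s))
    (hIqC : Integrable (fun s => qC s * f s))
    (hIcE : Integrable (fun s => cE s * f s))
    (hIcC : Integrable (fun s => cC s * f s))
    (hΔC : ∀ s, 0 < cC s - cE s)
    (hρcont : Continuous (fun s => (qC s - qE s) / (cC s - cE s)))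
    (hρanti : StrictAnti (fun s => (qC s - qE s) / (cC s - cE s)))
    (τstar : ℝ) (hτstar : (qC τstar - qE τstar) / (cC τstar - cE τstar) = lam) :
    let J : ℝ → ℝ := fun τ =>
      ((∫ s in Ioi τ, qE s * f s) + ∫ s in Iio τ, qC s * f s)
        - lam * ((∫ s in Ioi τ, cE s * f s) + ∫ s in Iio τ, cC s * f s)
    StrictMonoOn J (Iic τstar) ∧ StrictAntiOn J (Ici τstar)
      ∧ ∀ τ : ℝ, τ ≠ τstar → J τ < J τstar :=
  stmt_5_general f qE qC cE cC lam hfpos hIqE hIqC hIcE hIcC hΔC hρanti τstar hτstar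
end

section
/- In the score-threshold routing model, define the pointwise edge utility uE(s) = qE(s) − λ·cE(s) and cloud utility uC(s) = qC(s) − λ·cC(s). Then uC(s) − uE(s) = ΔC(s)·(ρ(s) − λ) for all s; consequently, if ΔC(s) > 0 for all s, ρ is strictly decreasing, and ρ(τ*) = λ, then uC(s) > uE(s) for every s < τ* and uC(s) < uE(s) for every s > τ* (single-crossing of the cloud–edge utility gap at τ*). -/
theorem utility_gap_eq_mul_sub {K : Type*} [Field K] (qE qC cE cC lam : K)
    (hΔC : cC - cE ≠ 0) :
    (qC - lam * cC) - (qE - lam * cE) = (cC - cE) * ((qC - qE) / (cC - cE) - lam) := by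
  rw [mul_sub, mul_div_cancel₀ _ hΔC]
  ring

theorem stmt_6_general (qE qC cE cC : ℝ → ℝ) (lam : ℝ)
    (hΔC : ∀ s, 0 < cC s - cE s)
    (hρanti : StrictAnti (fun s => (qC s - qE s) / (cC s - cE s)))
    (τstar : ℝ) (hτstar : (qC τstar - qE τstar) / (cC τstar - cE τstar) = lam) :
    (∀ s : ℝ, (qC s - lam * cC s) - (qE s - lam * cE s)
        = (cC s - cE s) * ((qC s - qE s) / (cC s - cE s) - lam))
    ∧ (∀ s : ℝ, s < τstar → qE s - lam * cE s < qC s - lam * cC s)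
    ∧ (∀ s : ℝ, τstar < s → qC s - lam * cC s < qE s - lam * cE s) := by
  have gap s := utility_gap_eq_mul_sub (qE s) (qC s) (cE s) (cC s) lam (hΔC s).ne'
  refine ⟨gap, fun s hs => ?_, fun s hs => ?_⟩
  · have hρ : lam < (qC s - qE s) / (cC s - cE s) := hτstar ▸ hρanti hs
    rw [← sub_pos, gap]
    exact mul_pos (hΔC s) (sub_pos.2 hρ)
  · have hρ : (qC s - qE s) / (cC s - cE s) < lam := hτstar ▸ hρanti hs
    rw [← sub_neg, gap]
    exact mul_neg_of_pos_of_neg (hΔC s) (sub_neg.2 hρ)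

/-- With `uE(s) = qE(s) − λ·cE(s)` and `uC(s) = qC(s) − λ·cC(s)`,
`uC(s) − uE(s) = ΔC(s)·(ρ(s) − λ)` for all `s`; hence if `ΔC > 0`, `ρ` is strictly
decreasing, and `ρ(τ*) = λ`, then `uC > uE` left of `τ*` and `uC < uE` right of `τ*`
(single-crossing of the cloud–edge utility gap at `τ*`). -/
theorem stmt_6 (qE qC cE cC : ℝ → ℝ) (lam : ℝ) (hlam : 0 < lam)
    (hΔC : ∀ s, 0 < cC s - cE s)
    (hρanti : StrictAnti (fun s => (qC s - qE s) / (cC s - cE s)))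
    (τstar : ℝ) (hτstar : (qC τstar - qE τstar) / (cC τstar - cE τstar) = lam) :
    (∀ s : ℝ, (qC s - lam * cC s) - (qE s - lam * cE s)
        = (cC s - cE s) * ((qC s - qE s) / (cC s - cE s) - lam))
    ∧ (∀ s : ℝ, s < τstar → qE s - lam * cE s < qC s - lam * cC s)
    ∧ (∀ s : ℝ, τstar < s → qC s - lam * cC s < qE s - lam * cE s) :=
  stmt_6_general qE qC cE cC lam hΔC hρanti τstar hτstar
end

section
/- In the score-threshold routing model, suppose ΔC(s) > 0 for all s, ρ is strictly decreasing, and τ* ∈ ℝ satisfies ρ(τ*) = λ. Then the threshold policy at τ* is optimal among all measurable score-based policies: for every measurable set A ⊆ ℝ (the set of scores routed to the cloud) for which the integral exists, ∫_ℝ [1_A(s)·(qC(s) − λ·cC(s)) + 1_{Aᶜ}(s)·(qE(s) − λ·cE(s))] f(s) ds ≤ J(τ*), where J(τ*) is the utility of the policy that routes to the cloud exactly when s < τ*. -/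
/-!
Relative to always routing to the edge, sending the scores in `A` to the cloud gains
`∫_A (ΔQ - λ ΔC) f = ∫_A ΔC (ρ - λ) f`. Since `ΔC > 0`, `f > 0` and `ρ` is strictly decreasing
with `ρ(τ*) = λ`, this integrand is nonnegative below `τ*` and nonpositive from `τ*` on, so
no set `A` can gain more than `Iio τ*`; the threshold policy differs from `Iio τ*` only at the
null point `τ*`.
-/

open MeasureTheory Set

section SignChange

variable {α : Type*} {g : α → ℝ} {A S : Set α}

theorem Set.indicator_le_indicator_of_nonneg_of_nonpos (hpos : ∀ x ∈ S, 0 ≤ g x)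
    (hneg : ∀ x ∉ S, g x ≤ 0) (x : α) : A.indicator g x ≤ S.indicator g x := by
  by_cases hxS : x ∈ S <;> by_cases hxA : x ∈ A <;>
    simp [hxS, hxA, hpos x, hneg x]

variable [MeasurableSpace α] {μ : Measure α}

theorem setIntegral_le_setIntegral_of_nonneg_of_nonpos (hg : Integrable g μ)
    (hA : MeasurableSet A) (hS : MeasurableSet S) (hpos : ∀ x ∈ S, 0 ≤ g x)
    (hneg : ∀ x ∉ S, g x ≤ 0) : ∫ x in A, g x ∂μ ≤ ∫ x in S, g x ∂μ := by
  rw [← integral_indicator hA, ← integral_indicator hS]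
  exact integral_mono (hg.indicator hA) (hg.indicator hS)
    (indicator_le_indicator_of_nonneg_of_nonpos hpos hneg)

theorem integral_indicator_add_compl_indicator_mul {u v f : α → ℝ} (hA : MeasurableSet A)
    (hu : Integrable (fun x => u x * f x) μ) (hv : Integrable (fun x => v x * f x) μ) :
    ∫ x, (A.indicator u x + Aᶜ.indicator v x) * f x ∂μ
      = ∫ x, v x * f x ∂μ + ∫ x in A, (u x * f x - v x * f x) ∂μ := by
  have hsplit : (fun x => (A.indicator u x + Aᶜ.indicator v x) * f x)
      = fun x => v x * f x + A.indicator (fun x => u x * f x - v x * f x) x := by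
    funext x
    by_cases hx : x ∈ A <;> simp [hx]
  have hdiff : Integrable (A.indicator fun x => u x * f x - v x * f x) μ :=
    (hu.sub hv).indicator hA
  rw [hsplit, integral_add hv hdiff, integral_indicator hA]

end SignChange

theorem integral_Ioi_add_integral_Iio {μ : Measure ℝ} [NullSingletonClass μ] {u v : ℝ → ℝ}
    (τ : ℝ) (hu : Integrable u μ) (hv : Integrable v μ) :
    ∫ x in Ioi τ, v x ∂μ + ∫ x in Iio τ, u x ∂μ
      = ∫ x, v x ∂μ + ∫ x in Iio τ, (u x - v x) ∂μ := by
  rw [integral_sub hu.integrableOn hv.integrableOn,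
    ← intervalIntegral.integral_Iio_add_Ici hv.integrableOn hv.integrableOn,
    setIntegral_congr_set (Ioi_ae_eq_Ici (μ := μ))]
  ring

theorem stmt_7_general (f qE qC cE cC : ℝ → ℝ) (lam : ℝ)
    (hfpos : ∀ s, 0 < f s)
    (hIqE : Integrable (fun s => qE s * f s))
    (hIqC : Integrable (fun s => qC s * f s))
    (hIcE : Integrable (fun s => cE s * f s))
    (hIcC : Integrable (fun s => cC s * f s))
    (hΔC : ∀ s, 0 < cC s - cE s)
    (hρanti : StrictAnti (fun s => (qC s - qE s) / (cC s - cE s)))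
    (τstar : ℝ) (hτstar : (qC τstar - qE τstar) / (cC τstar - cE τstar) = lam)
    (A : Set ℝ) (hA : MeasurableSet A) :
    (∫ s, (A.indicator (fun s => qC s - lam * cC s) s
        + Aᶜ.indicator (fun s => qE s - lam * cE s) s) * f s)
      ≤ (∫ s in Ioi τstar, (qE s - lam * cE s) * f s)
        + ∫ s in Iio τstar, (qC s - lam * cC s) * f s := by
  have hIE : Integrable (fun s => (qE s - lam * cE s) * f s) :=
    (hIqE.sub (hIcE.const_mul lam)).congr (.of_forall fun s => by simp only [Pi.sub_apply]; ring)
  have hIC : Integrable (fun s => (qC s - lam * cC s) * f s) :=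
    (hIqC.sub (hIcC.const_mul lam)).congr (.of_forall fun s => by simp only [Pi.sub_apply]; ring)
  have hgain_eq : ∀ s, (qC s - lam * cC s) * f s - (qE s - lam * cE s) * f s
      = ((qC s - qE s) - lam * (cC s - cE s)) * f s := fun s => by ring
  have hpos : ∀ s ∈ Iio τstar, 0 ≤ (qC s - lam * cC s) * f s - (qE s - lam * cE s) * f s := by
    intro s hs
    have hρ : lam < (qC s - qE s) / (cC s - cE s) := hτstar ▸ hρanti hs
    have := (lt_div_iff₀ (hΔC s)).1 hρ
    rw [hgain_eq]
    exact mul_nonneg (by linarith) (hfpos s).le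
  have hneg : ∀ s ∉ Iio τstar, (qC s - lam * cC s) * f s - (qE s - lam * cE s) * f s ≤ 0 := by
    intro s hs
    have hρ : (qC s - qE s) / (cC s - cE s) ≤ lam := hτstar ▸ hρanti.antitone (not_lt.1 hs)
    have := (div_le_iff₀ (hΔC s)).1 hρ
    rw [hgain_eq]
    exact mul_nonpos_of_nonpos_of_nonneg (by linarith) (hfpos s).le
  rw [integral_indicator_add_compl_indicator_mul hA hIC hIE,
    integral_Ioi_add_integral_Iio τstar hIC hIE]
  have hIgain : Integrable
      (fun s => (qC s - lam * cC s) * f s - (qE s - lam * cE s) * f s) := hIC.sub hIE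
  exact add_le_add le_rfl
    (setIntegral_le_setIntegral_of_nonneg_of_nonpos hIgain hA measurableSet_Iio hpos hneg)

/-- Optimality of the threshold policy among all measurable score-based
policies: if `ΔC > 0`, `ρ` is strictly decreasing, and `ρ(τ*) = λ`, then for every
measurable cloud-routing set `A` whose policy integral exists,
`∫ [1_A·(qC − λcC) + 1_{Aᶜ}·(qE − λcE)]·f ≤ J(τ*)`. -/
theorem stmt_7 (f qE qC cE cC : ℝ → ℝ) (lam : ℝ) (hlam : 0 < lam)
    (hf : Continuous f) (hfpos : ∀ s, 0 < f s) (hfprob : (∫ s, f s) = 1)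
    (hqE : Continuous qE) (hqC : Continuous qC)
    (hcE : Continuous cE) (hcC : Continuous cC)
    (hIqE : Integrable (fun s => qE s * f s))
    (hIqC : Integrable (fun s => qC s * f s))
    (hIcE : Integrable (fun s => cE s * f s))
    (hIcC : Integrable (fun s => cC s * f s))
    (hΔC : ∀ s, 0 < cC s - cE s)
    (hρanti : StrictAnti (fun s => (qC s - qE s) / (cC s - cE s)))
    (τstar : ℝ) (hτstar : (qC τstar - qE τstar) / (cC τstar - cE τstar) = lam)
    (A : Set ℝ) (hA : MeasurableSet A)
    (hInt : Integrable (fun s =>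
      (A.indicator (fun s => qC s - lam * cC s) s
        + Aᶜ.indicator (fun s => qE s - lam * cE s) s) * f s)) :
    (∫ s, (A.indicator (fun s => qC s - lam * cC s) s
        + Aᶜ.indicator (fun s => qE s - lam * cE s) s) * f s)
      ≤ (∫ s in Ioi τstar, (qE s - lam * cE s) * f s)
        + ∫ s in Iio τstar, (qC s - lam * cC s) * f s :=
  stmt_7_general f qE qC cE cC lam hfpos hIqE hIqC hIcE hIcC hΔC hρanti τstar hτstar A hA
end

section
/- In the score-threshold routing model with network cost scaling κ > 0, suppose f(s) > 0 and ΔC(s) > 0 for all s, ρ is continuous and strictly decreasing, and there exists τ*(κ) with ρ(τ*(κ)) = λ·κ. Then τ*(κ) is the unique global maximizer of the state-dependent utility J_κ(τ) = Q(τ) − λ·C_κ(τ), where C_κ(τ) = ∫_τ^∞ cE(s) f(s) ds + ∫_{−∞}^τ (cE(s) + κ·ΔC(s)) f(s) ds, and it is characterized by the first-order balance ΔQ(τ*(κ)) = λ·κ·ΔC(τ*(κ)). -/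
open MeasureTheory Set

/-!
Moving the threshold from `σ` to `τ` reroutes the scores between `σ` and `τ` from edge to
cloud, so `J_κ τ - J_κ σ = ∫_σ^τ (ΔQ - λκ ΔC) f`. Since `ΔC > 0`, the integrand has the sign
of `ρ - λκ`, which by strict monotonicity of `ρ` is positive below `τ*` and negative above it.
Hence `J_κ` strictly increases up to `τ*` and strictly decreases after it.
-/

/-- Scores above `τ` are served at the edge (value density `a`), scores below `τ` at the cloud
(value density `b`). -/
noncomputable def thresholdValue (a b : ℝ → ℝ) (τ : ℝ) : ℝ :=
  (∫ s in Ioi τ, a s) + ∫ s in Iio τ, b s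

theorem thresholdValue_sub_thresholdValue {a b : ℝ → ℝ} (ha : Integrable a) (hb : Integrable b)
    (σ τ : ℝ) :
    thresholdValue a b τ - thresholdValue a b σ = ∫ s in σ..τ, (b s - a s) := by
  have hedge := intervalIntegral.integral_Ioi_sub_Ioi' ha.integrableOn ha.integrableOn
    (a := σ) (b := τ)
  have hcloud := intervalIntegral.integral_Iio_sub_Iio' hb.integrableOn hb.integrableOn
    (a := σ) (b := τ)
  rw [intervalIntegral.integral_sub hb.intervalIntegrable ha.intervalIntegrable]
  unfold thresholdValue
  linarith

theorem thresholdValue_sub_const_mul_sub {a b c d : ℝ → ℝ} (ha : Integrable a)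
    (hb : Integrable b) (hc : Integrable c) (hd : Integrable d) (lam σ τ : ℝ) :
    (thresholdValue a b τ - lam * thresholdValue c d τ)
        - (thresholdValue a b σ - lam * thresholdValue c d σ)
      = ∫ s in σ..τ, (b s - a s - lam * (d s - c s)) := by
  rw [intervalIntegral.integral_sub, intervalIntegral.integral_const_mul]
  · linear_combination thresholdValue_sub_thresholdValue ha hb σ τ
      - lam * thresholdValue_sub_thresholdValue hc hd σ τ
  · exact (hb.sub ha).intervalIntegrable
  · exact ((hd.sub hc).const_mul lam).intervalIntegrable

theorem intervalIntegral_neg_of_sign_change {g : ℝ → ℝ} (hg : Integrable g) {t : ℝ}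
    (hpos : ∀ s < t, 0 < g s) (hneg : ∀ s, t < s → g s < 0) {τ : ℝ} (hτ : τ ≠ t) :
    ∫ s in t..τ, g s < 0 := by
  rcases hτ.lt_or_gt with hlt | hgt
  · have h := intervalIntegral.intervalIntegral_pos_of_pos_on hg.intervalIntegrable
      (fun s hs => hpos s hs.2) hlt
    rw [intervalIntegral.integral_symm]
    linarith
  · have h := intervalIntegral.intervalIntegral_pos_of_pos_on hg.neg.intervalIntegrable
      (fun s hs => neg_pos.mpr (hneg s hs.1)) hgt
    simp only [Pi.neg_apply, intervalIntegral.integral_neg] at h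
    linarith

section RatioThreshold

variable {p q : ℝ → ℝ} {c t : ℝ}

theorem sub_mul_pos_of_lt_of_strictAnti_div (hq : ∀ s, 0 < q s)
    (hanti : StrictAnti fun s => p s / q s) (ht : p t / q t = c) {s : ℝ} (hs : s < t) :
    0 < p s - c * q s := by
  have h : c < p s / q s := ht ▸ hanti hs
  rw [lt_div_iff₀ (hq s)] at h
  linarith

theorem sub_mul_neg_of_gt_of_strictAnti_div (hq : ∀ s, 0 < q s)
    (hanti : StrictAnti fun s => p s / q s) (ht : p t / q t = c) {s : ℝ} (hs : t < s) :
    p s - c * q s < 0 := by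
  have h : p s / q s < c := ht ▸ hanti hs
  rw [div_lt_iff₀ (hq s)] at h
  linarith

theorem eq_mul_iff_of_strictAnti_div (hq : ∀ s, 0 < q s)
    (hanti : StrictAnti fun s => p s / q s) (ht : p t / q t = c) (τ : ℝ) :
    p τ = c * q τ ↔ τ = t := by
  rw [← div_eq_iff (hq τ).ne', ← ht]
  exact hanti.injective.eq_iff

end RatioThreshold

theorem stmt_11_general (f qE qC cE cC : ℝ → ℝ) (lam κ : ℝ)
    (hfpos : ∀ s, 0 < f s)
    (hIqE : Integrable (fun s => qE s * f s))
    (hIqC : Integrable (fun s => qC s * f s))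
    (hIcE : Integrable (fun s => cE s * f s))
    (hIΔC : Integrable (fun s => (cC s - cE s) * f s))
    (hΔC : ∀ s, 0 < cC s - cE s)
    (hρanti : StrictAnti (fun s => (qC s - qE s) / (cC s - cE s)))
    (τstar : ℝ) (hτstar : (qC τstar - qE τstar) / (cC τstar - cE τstar) = lam * κ) :
    let Cκ : ℝ → ℝ := fun τ =>
      (∫ s in Ioi τ, cE s * f s) + ∫ s in Iio τ, (cE s + κ * (cC s - cE s)) * f s
    let Jκ : ℝ → ℝ := fun τ =>
      ((∫ s in Ioi τ, qE s * f s) + ∫ s in Iio τ, qC s * f s) - lam * Cκ τ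
    (∀ τ : ℝ, τ ≠ τstar → Jκ τ < Jκ τstar)
      ∧ (∀ τ : ℝ, qC τ - qE τ = lam * κ * (cC τ - cE τ) ↔ τ = τstar) := by
  intro Cκ Jκ
  set g : ℝ → ℝ := fun s => (qC s - qE s - lam * κ * (cC s - cE s)) * f s
  have hIcκ : Integrable fun s => (cE s + κ * (cC s - cE s)) * f s := by
    refine (hIcE.add (hIΔC.const_mul κ)).congr (ae_of_all _ fun s => ?_)
    simp only [Pi.add_apply]
    ring
  have hJ : ∀ τ, Jκ τ - Jκ τstar = ∫ s in τstar..τ, g s := fun τ =>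
    (thresholdValue_sub_const_mul_sub hIqE hIqC hIcE hIcκ lam τstar τ).trans
      (intervalIntegral.integral_congr fun s _ => by simp only [g]; ring)
  have hIg : Integrable g := by
    refine ((hIqC.sub hIqE).sub (hIΔC.const_mul (lam * κ))).congr (ae_of_all _ fun s => ?_)
    simp only [Pi.sub_apply, g]
    ring
  have hg_pos : ∀ s < τstar, 0 < g s := fun s hs =>
    mul_pos (sub_mul_pos_of_lt_of_strictAnti_div hΔC hρanti hτstar hs) (hfpos s)
  have hg_neg : ∀ s, τstar < s → g s < 0 := fun s hs =>
    mul_neg_of_neg_of_pos (sub_mul_neg_of_gt_of_strictAnti_div hΔC hρanti hτstar hs) (hfpos s)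
  refine ⟨fun τ hτ => ?_, eq_mul_iff_of_strictAnti_div hΔC hρanti hτstar⟩
  have := intervalIntegral_neg_of_sign_change hIg hg_pos hg_neg hτ
  linarith [hJ τ]

/-- With network cost scaling `κ > 0`, `f > 0`, `ΔC > 0`, `ρ` continuous
and strictly decreasing, and `ρ(τ*(κ)) = λ·κ`, the point `τ*(κ)` is the unique global
maximizer of the state-dependent utility `J_κ(τ) = Q(τ) − λ·C_κ(τ)`, and it is
characterized by the first-order balance `ΔQ(τ) = λ·κ·ΔC(τ) ↔ τ = τ*(κ)`. -/
theorem stmt_11 (f qE qC cE cC : ℝ → ℝ) (lam κ : ℝ) (hlam : 0 < lam) (hκ : 0 < κ)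
    (hf : Continuous f) (hfpos : ∀ s, 0 < f s) (hfprob : (∫ s, f s) = 1)
    (hqE : Continuous qE) (hqC : Continuous qC)
    (hcE : Continuous cE) (hcC : Continuous cC)
    (hIqE : Integrable (fun s => qE s * f s))
    (hIqC : Integrable (fun s => qC s * f s))
    (hIcE : Integrable (fun s => cE s * f s))
    (hIcC : Integrable (fun s => cC s * f s))
    (hIΔC : Integrable (fun s => (cC s - cE s) * f s))
    (hΔC : ∀ s, 0 < cC s - cE s)
    (hρcont : Continuous (fun s => (qC s - qE s) / (cC s - cE s)))
    (hρanti : StrictAnti (fun s => (qC s - qE s) / (cC s - cE s)))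
    (τstar : ℝ) (hτstar : (qC τstar - qE τstar) / (cC τstar - cE τstar) = lam * κ) :
    let Cκ : ℝ → ℝ := fun τ =>
      (∫ s in Ioi τ, cE s * f s) + ∫ s in Iio τ, (cE s + κ * (cC s - cE s)) * f s
    let Jκ : ℝ → ℝ := fun τ =>
      ((∫ s in Ioi τ, qE s * f s) + ∫ s in Iio τ, qC s * f s) - lam * Cκ τ
    (∀ τ : ℝ, τ ≠ τstar → Jκ τ < Jκ τstar)
      ∧ (∀ τ : ℝ, qC τ - qE τ = lam * κ * (cC τ - cE τ) ↔ τ = τstar) :=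
  stmt_11_general f qE qC cE cC lam κ hfpos hIqE hIqC hIcE hIΔC hΔC hρanti τstar hτstar
end
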